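/- For every fixed t > 0, lim_{α→∞} ∫₀^t ∫₀^s F_α(s−r) (4π(s−r))^{−1/2} dr ds = 0. Consequently, the variance (4/3)(χ(ρ)/√π) t^{3/2} + 2χ(ρ) ∫₀^t ∫₀^s F_α(s−r)(4π(s−r))^{−1/2} dr ds of the limiting occupation-time process Γ_α at the slow bond converges, as α → ∞, to the variance (4/3)(χ(ρ)/√π) t^{3/2} of Γ_∞. -/

import Mathlib

open MeasureTheory Real Filter

/-- `F_α(t) = (1/(2t)) ∫₀^∞ z e^{−z²/(4t) − 2αz} dz`, appearing in the variance of the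
limiting occupation-time process of the slow-bond exclusion process at `β = 1`. -/
noncomputable def Falpha (α t : ℝ) : ℝ :=
  (1 / (2 * t)) * ∫ z in Set.Ioi (0:ℝ), z * Real.exp (-z ^ 2 / (4 * t) - 2 * α * z)

/-!
Dropping either factor of the exponential in the integrand of `F_α(τ)` leaves an explicit integral:
the Gaussian moment gives `F_α(τ) ≤ 1`, the Gamma integral gives `F_α(τ) ≤ (8α²τ)⁻¹`.
Interpolating, `F_α(τ) ≤ (8α²τ)^{-1/4}`, so the kernel `F_α(τ)(4πτ)^{-1/2}` is at most a multiple
of `α^{-1/2} τ^{-3/4}`. The exponent `-3/4` is integrable at `0`, so the double integral is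
`O(α^{-1/2})`.
-/

open Set

theorem integral_mul_exp_neg_mul_sq_Ioi {b : ℝ} (hb : 0 < b) :
    ∫ z in Ioi (0:ℝ), z * exp (-b * z ^ 2) = (2 * b)⁻¹ := by
  have h := integral_mul_cexp_neg_mul_sq (b := (b : ℂ)) (by simpa using hb)
  rw [← Complex.ofReal_inj, ← integral_complex_ofReal]
  push_cast
  exact h

theorem integral_mul_exp_neg_mul_Ioi {b : ℝ} (hb : 0 < b) :
    ∫ z in Ioi (0:ℝ), z * exp (-(b * z)) = (b ^ 2)⁻¹ := by
  have h := Real.integral_rpow_mul_exp_neg_mul_Ioi two_pos hb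
  norm_num at h
  simpa using h

theorem le_rpow_of_le_of_le_one {x B θ : ℝ} (hx₀ : 0 ≤ x) (hx₁ : x ≤ 1) (hxB : x ≤ B)
    (hθ₀ : 0 ≤ θ) (hθ₁ : θ ≤ 1) : x ≤ B ^ θ :=
  (self_le_rpow_of_le_one hx₀ hx₁ hθ₁).trans (rpow_le_rpow hx₀ hxB hθ₀)

theorem abs_intervalIntegral_le_of_abs_le_rpow {f : ℝ → ℝ} {c p s : ℝ} (hp : -1 < p)
    (hs : 0 ≤ s) (hf : ∀ τ ∈ Ioc 0 s, |f τ| ≤ c * τ ^ p) :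
    |∫ τ in (0:ℝ)..s, f τ| ≤ c * s ^ (p + 1) / (p + 1) := by
  have hint : IntervalIntegrable (fun τ : ℝ => c * τ ^ p) volume 0 s :=
    (intervalIntegral.intervalIntegrable_rpow' hp).const_mul c
  refine (intervalIntegral.norm_integral_le_of_norm_le (f := f) hs (ae_of_all _ hf)
    hint).trans_eq ?_
  rw [intervalIntegral.integral_const_mul, integral_rpow (Or.inl hp),
    zero_rpow (by linarith : p + 1 ≠ 0), sub_zero, mul_div_assoc]

theorem abs_integral_integral_comp_sub_le {k : ℝ → ℝ} {c p t : ℝ} (hp : -1 < p)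
    (ht : 0 ≤ t) (hk : ∀ τ ∈ Ioc 0 t, |k τ| ≤ c * τ ^ p) :
    |∫ s in (0:ℝ)..t, ∫ r in (0:ℝ)..s, k (s - r)|
      ≤ c * t ^ (p + 2) / ((p + 1) * (p + 2)) := by
  have inner : ∀ s ∈ Ioc 0 t,
      |∫ r in (0:ℝ)..s, k (s - r)| ≤ c / (p + 1) * s ^ (p + 1) := by
    intro s hs
    rw [intervalIntegral.integral_comp_sub_left k s, sub_self, sub_zero]
    exact (abs_intervalIntegral_le_of_abs_le_rpow hp hs.1.le
      fun τ hτ => hk τ ⟨hτ.1, hτ.2.trans hs.2⟩).trans_eq (by ring)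
  refine (abs_intervalIntegral_le_of_abs_le_rpow (by linarith) ht inner).trans_eq ?_
  rw [add_assoc, one_add_one_eq_two]
  field_simp

theorem Falpha_nonneg (α : ℝ) {τ : ℝ} (hτ : 0 ≤ τ) : 0 ≤ Falpha α τ :=
  mul_nonneg (by positivity) <| setIntegral_nonneg measurableSet_Ioi fun z (hz : 0 < z) => by
    positivity

theorem Falpha_le_of_integrand_le {α τ : ℝ} {g : ℝ → ℝ} (hτ : 0 ≤ τ)
    (hg : IntegrableOn g (Ioi 0))
    (hle : ∀ z, 0 < z → z * exp (-z ^ 2 / (4 * τ) - 2 * α * z) ≤ g z) :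
    Falpha α τ ≤ 1 / (2 * τ) * ∫ z in Ioi 0, g z := by
  refine mul_le_mul_of_nonneg_left (integral_mono_of_nonneg ?_ hg ?_) (by positivity)
  · filter_upwards [ae_restrict_mem measurableSet_Ioi] with z (hz : 0 < z)
    positivity
  · filter_upwards [ae_restrict_mem measurableSet_Ioi] with z hz using hle z hz

theorem Falpha_le_one {α τ : ℝ} (hα : 0 ≤ α) (hτ : 0 < τ) : Falpha α τ ≤ 1 := by
  have hb : 0 < 1 / (4 * τ) := by positivity
  have hint : IntegrableOn (fun z => z * exp (-(1 / (4 * τ)) * z ^ 2)) (Ioi 0) := by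
    simpa using integrableOn_rpow_mul_exp_neg_mul_sq hb (s := 1) (by norm_num)
  calc Falpha α τ ≤ 1 / (2 * τ) * ∫ z in Ioi 0, z * exp (-(1 / (4 * τ)) * z ^ 2) := by
        refine Falpha_le_of_integrand_le hτ.le hint fun z hz =>
          mul_le_mul_of_nonneg_left (exp_le_exp.2 ?_) hz.le
        have : 0 ≤ 2 * α * z := by positivity
        linarith [show -z ^ 2 / (4 * τ) = -(1 / (4 * τ)) * z ^ 2 by ring]
    _ = 1 := by
        rw [integral_mul_exp_neg_mul_sq_Ioi hb]
        field_simp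
        norm_num

theorem Falpha_le_inv {α τ : ℝ} (hα : 0 < α) (hτ : 0 < τ) :
    Falpha α τ ≤ (8 * α ^ 2 * τ)⁻¹ := by
  have hb : 0 < 2 * α := by positivity
  have hint : IntegrableOn (fun z => z * exp (-(2 * α * z))) (Ioi 0) := by
    simpa using integrableOn_rpow_mul_exp_neg_mul_rpow (p := 1) (s := 1) (by norm_num) one_pos hb
  calc Falpha α τ ≤ 1 / (2 * τ) * ∫ z in Ioi 0, z * exp (-(2 * α * z)) := by
        refine Falpha_le_of_integrand_le hτ.le hint fun z hz =>
          mul_le_mul_of_nonneg_left (exp_le_exp.2 ?_) hz.le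
        have : -z ^ 2 / (4 * τ) ≤ 0 := by rw [neg_div]; exact neg_nonpos.2 (by positivity)
        linarith
    _ = (8 * α ^ 2 * τ)⁻¹ := by
        rw [integral_mul_exp_neg_mul_Ioi hb]
        field_simp
        ring

theorem Falpha_mul_inv_sqrt_le {α τ : ℝ} (hα : 0 < α) (hτ : 0 < τ) :
    Falpha α τ * (√(4 * π * τ))⁻¹
      ≤ (8 * α ^ 2)⁻¹ ^ (1 / 4 : ℝ) * (√(4 * π))⁻¹ * τ ^ (-(3 / 4) : ℝ) := by
  have hF : Falpha α τ ≤ (8 * α ^ 2 * τ)⁻¹ ^ (1 / 4 : ℝ) :=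
    le_rpow_of_le_of_le_one (Falpha_nonneg α hτ.le) (Falpha_le_one hα.le hτ)
      (Falpha_le_inv hα hτ) (by norm_num) (by norm_num)
  refine (mul_le_mul_of_nonneg_right hF (by positivity)).trans_eq ?_
  have hτpow : (τ⁻¹) ^ (1 / 4 : ℝ) * (√τ)⁻¹ = τ ^ (-(3 / 4) : ℝ) := by
    rw [sqrt_eq_rpow, inv_rpow hτ.le, ← rpow_neg hτ.le, ← rpow_neg hτ.le, ← rpow_add hτ]
    norm_num
  rw [mul_inv, mul_rpow (by positivity) (by positivity), sqrt_mul (by positivity), mul_inv,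
    ← hτpow]
  ring

/-- `lim_{α→∞} ∫₀^t ∫₀^s F_α(s−r)(4π(s−r))^{−1/2} dr ds = 0`; consequently the
variance of the limiting occupation-time process `Γ_α` at the slow bond converges, as
`α → ∞`, to the variance `(4/3)(χ(ρ)/√π) t^{3/2}` of `Γ_∞`. -/
theorem variance_tendsto_atTop (t : ℝ) (ht : 0 < t) :
    Filter.Tendsto (fun α : ℝ => ∫ s in (0:ℝ)..t, ∫ r in (0:ℝ)..s,
        Falpha α (s - r) * (Real.sqrt (4 * Real.pi * (s - r)))⁻¹)
      Filter.atTop (nhds 0) ∧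
    ∀ ρ ∈ Set.Icc (0:ℝ) 1,
      Filter.Tendsto (fun α : ℝ =>
          (4 / 3) * (ρ * (1 - ρ) / Real.sqrt Real.pi) * t ^ ((3:ℝ)/2)
            + 2 * (ρ * (1 - ρ)) * ∫ s in (0:ℝ)..t, ∫ r in (0:ℝ)..s,
                Falpha α (s - r) * (Real.sqrt (4 * Real.pi * (s - r)))⁻¹)
        Filter.atTop
        (nhds ((4 / 3) * (ρ * (1 - ρ) / Real.sqrt Real.pi) * t ^ ((3:ℝ)/2))) := by
  set C : ℝ → ℝ := fun α => (8 * α ^ 2)⁻¹ ^ (1 / 4 : ℝ) * (√(4 * π))⁻¹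
  have hC : Tendsto C atTop (nhds 0) := by
    have h8 : Tendsto (fun α : ℝ => 8 * α ^ 2) atTop atTop :=
      (tendsto_pow_atTop two_ne_zero).const_mul_atTop (by norm_num)
    have h := ((tendsto_inv_atTop_zero.comp h8).rpow_const (p := 1 / 4)
      (Or.inr (by norm_num))).mul_const (√(4 * π))⁻¹
    rwa [zero_rpow (by norm_num), zero_mul] at h
  have hlim : Tendsto (fun α : ℝ => ∫ s in (0:ℝ)..t, ∫ r in (0:ℝ)..s,
      Falpha α (s - r) * (√(4 * π * (s - r)))⁻¹) atTop (nhds 0) := by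
    have hbound := hC.mul_const (t ^ ((5:ℝ) / 4) / ((1 / 4) * (5 / 4)))
    rw [zero_mul] at hbound
    refine squeeze_zero_norm' ?_ hbound
    filter_upwards [eventually_gt_atTop 0] with α hα
    have hk : ∀ τ ∈ Ioc 0 t,
        |Falpha α τ * (√(4 * π * τ))⁻¹| ≤ C α * τ ^ (-(3 / 4) : ℝ) := fun τ hτ =>
      (abs_of_nonneg (mul_nonneg (Falpha_nonneg α hτ.1.le) (by positivity))).trans_le
        (Falpha_mul_inv_sqrt_le hα hτ.1)
    refine (abs_integral_integral_comp_sub_le (by norm_num) ht.le hk).trans_eq ?_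
    norm_num [mul_div_assoc]
  refine ⟨hlim, fun ρ _ => ?_⟩
  simpa using (hlim.const_mul (2 * (ρ * (1 - ρ)))).const_add
    ((4 / 3) * (ρ * (1 - ρ) / √π) * t ^ ((3:ℝ)/2))
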